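/- Let η ∈ (1/2, 1). There exist η̄ ∈ (0,1) and a constant c' > 0, depending only on η and the dimension n, such that for every measurable set F ⊆ ℝⁿ and every (y,t) ∈ R_{1−η}(F^{[η̄]}) ∩ D one has γ(F ∩ B(y,t)) ≥ c' · γ(B(y,t)). -/
import Mathlib


open MeasureTheory Metric Set
open scoped ENNReal

noncomputable section

/-- Euclidean space ℝⁿ. -/
abbrev E (n : ℕ) := EuclideanSpace ℝ (Fin n)

/-- The standard Gaussian measure on ℝⁿ. -/
def gaussianM (n : ℕ) : Measure (E n) :=
  volume.withDensity
    (fun x => ENNReal.ofReal ((2 * Real.pi) ^ (-(n : ℝ) / 2) * Real.exp (-‖x‖ ^ 2 / 2)))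

/-- m(x) = min {1, 1/|x|} (with value 1 at x = 0). -/
def mFun {n : ℕ} (x : E n) : ℝ := if ‖x‖ ≤ 1 then 1 else ‖x‖⁻¹

/-- The measure `dt/t` on `(0,∞)`. -/
def tMeasure : Measure ℝ :=
  (volume.restrict (Set.Ioi (0 : ℝ))).withDensity fun t => ENNReal.ofReal t⁻¹

/-- The admissible region `D = {(x,t) : 0 < t < m(x)}`. -/
def Dset (n : ℕ) : Set (E n × ℝ) := {p | 0 < p.2 ∧ p.2 < mFun p.1}

/-- `R_α(A) = {(y,t) : t > 0, d(y,A) < α t}` (stated via a witness in `A`). -/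
def Rset (n : ℕ) (α : ℝ) (A : Set (E n)) : Set (E n × ℝ) :=
  {p | 0 < p.2 ∧ ∃ x ∈ A, dist p.1 x < α * p.2}

/-- `A^{[β]}`: the points of admissible `β`-density of `A`, i.e. those `x` with
`γ(A ∩ B) ≥ β γ(B)` for every ball `B ∈ 𝓑_{3/2}` centred at `x`. -/
def densitySet (n : ℕ) (β : ℝ) (A : Set (E n)) : Set (E n) :=
  {x | ∀ r : ℝ, 0 ≤ r → r ≤ (3 / 2) * mFun x →
    ENNReal.ofReal β * gaussianM n (ball x r) ≤ gaussianM n (A ∩ ball x r)}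

lemma gaussianM_le (n : ℕ) (s : Set (E n)) (hs : MeasurableSet s) (L : ℝ) (hL0 : 0 ≤ L)
    (hL : ∀ u ∈ s, L ≤ ‖u‖) :
    gaussianM n s ≤ ENNReal.ofReal ((2 * Real.pi) ^ (-(n : ℝ) / 2) * Real.exp (-L ^ 2 / 2)) * volume s := by
  rw [gaussianM, withDensity_apply _ hs, ← setLIntegral_const]
  refine setLIntegral_mono' hs fun u hu => ?_
  refine ENNReal.ofReal_le_ofReal ?_
  have h1 : L ^ 2 ≤ ‖u‖ ^ 2 := by nlinarith [hL u hu]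
  have := Real.rpow_nonneg (by positivity : (0:ℝ) ≤ 2 * Real.pi) (-(n : ℝ) / 2)
  have := Real.exp_le_exp.2 (by linarith : -‖u‖ ^ 2 / 2 ≤ -L ^ 2 / 2)
  nlinarith [Real.exp_pos (-‖u‖ ^ 2 / 2)]

lemma gaussianM_ge (n : ℕ) (s : Set (E n)) (hs : MeasurableSet s) (U : ℝ)
    (hU : ∀ u ∈ s, ‖u‖ ≤ U) :
    ENNReal.ofReal ((2 * Real.pi) ^ (-(n : ℝ) / 2) * Real.exp (-U ^ 2 / 2)) * volume s ≤ gaussianM n s := by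
  rw [gaussianM, withDensity_apply _ hs, ← setLIntegral_const]
  refine setLIntegral_mono (by fun_prop) fun u hu => ?_
  refine ENNReal.ofReal_le_ofReal ?_
  have h1 : ‖u‖ ^ 2 ≤ U ^ 2 := by nlinarith [hU u hu, norm_nonneg u]
  have := Real.rpow_nonneg (by positivity : (0:ℝ) ≤ 2 * Real.pi) (-(n : ℝ) / 2)
  have := Real.exp_le_exp.2 (by linarith : -U ^ 2 / 2 ≤ -‖u‖ ^ 2 / 2)
  nlinarith [Real.exp_pos (-U ^ 2 / 2)]

lemma mFun_le_one {n : ℕ} (x : E n) : mFun x ≤ 1 := by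
  rw [mFun]; split_ifs with h
  · exact le_rfl
  · have h1 : (1:ℝ) < ‖x‖ := not_le.1 h
    rw [inv_eq_one_div, div_le_one (by linarith)]; linarith

/-- For `η ∈ (1/2,1)` there are `η̄ ∈ (0,1)` and `c' > 0`, depending only on `η` and `n`,
such that for every measurable `F ⊆ ℝⁿ` and every `(y,t) ∈ R_{1-η}(F^{[η̄]}) ∩ D` one has
`γ(F ∩ B(y,t)) ≥ c' γ(B(y,t))`. -/
theorem stmt12 (n : ℕ) (hn : 1 ≤ n) (η : ℝ) (hη : η ∈ Set.Ioo (1 / 2 : ℝ) 1) :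
    ∃ ηb ∈ Set.Ioo (0 : ℝ) 1, ∃ c' : ℝ, 0 < c' ∧
      ∀ F : Set (E n), MeasurableSet F →
        ∀ y : E n, ∀ t : ℝ,
          (y, t) ∈ Rset n (1 - η) (densitySet n ηb F) ∩ Dset n →
          ENNReal.ofReal c' * gaussianM n (ball y t) ≤ gaussianM n (F ∩ ball y t) := by
  obtain ⟨hη1, hη2⟩ := hη
  have hη0 : 0 < η := by linarith
  set c₀ : ℝ := (2 * Real.pi) ^ (-(n : ℝ) / 2) with hc₀def
  have hc₀ : 0 ≤ c₀ := Real.rpow_nonneg (by positivity) _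
  refine ⟨1/2, ⟨by norm_num, by norm_num⟩, (1/2) * η ^ n * Real.exp (-2), by positivity,
    fun F hF y t hmem => ?_⟩
  obtain ⟨⟨ht, x, hx, hdx⟩, _, htm⟩ := hmem
  simp only at ht hdx htm
  -- basic facts
  have ht1 : t < 1 := lt_of_lt_of_le htm (mFun_le_one y)
  have hty : t * ‖y‖ ≤ 1 := by
    by_cases h : ‖y‖ ≤ 1
    · nlinarith [norm_nonneg y]
    · rw [mFun, if_neg h] at htm
      have h0 : (0:ℝ) < ‖y‖ := by linarith [not_le.1 h]
      have := mul_lt_mul_of_pos_right htm h0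
      rw [inv_mul_cancel₀ h0.ne'] at this
      linarith
  have hdxt : dist y x < t / 2 := by
    have : (1 - η) * t < t / 2 := by nlinarith
    linarith
  -- ball x (η*t) ⊆ ball y t
  have hsub : ball x (η * t) ⊆ ball y t := by
    intro z hz
    rw [mem_ball] at hz ⊢
    have := dist_triangle z x y
    rw [dist_comm x y] at this
    nlinarith [dist_nonneg (x := z) (y := x)]
  -- admissibility of the radius η*t at x
  have hr2 : η * t ≤ (3/2) * mFun x := by
    rw [mFun]; split_ifs with h
    · nlinarith
    · have hx1 : (1:ℝ) < ‖x‖ := not_le.1 h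
      have hx0 : (0:ℝ) < ‖x‖ := by linarith
      have hxy : ‖x‖ ≤ ‖y‖ + dist y x := by
        have := norm_sub_norm_le x y
        rw [← dist_eq_norm, dist_comm] at this
        linarith
      rw [show (3/2:ℝ) * ‖x‖⁻¹ = (3/2) / ‖x‖ by ring, le_div_iff₀ hx0]
      nlinarith [norm_nonneg y, dist_nonneg (x := y) (y := x)]
  -- density hypothesis at scale η*t
  have hdens := hx (η * t) (by positivity) hr2
  -- norm bounds on the balls
  set L : ℝ := max (‖y‖ - t) 0 with hLdef
  set U : ℝ := ‖y‖ + t with hUdef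
  have hL0 : 0 ≤ L := le_max_right _ _
  have hLb : ∀ u ∈ ball y t, L ≤ ‖u‖ := by
    intro u hu
    rw [mem_ball] at hu
    have h1 : |‖u‖ - ‖y‖| ≤ dist u y := by
      rw [dist_eq_norm]; exact abs_norm_sub_norm_le u y
    have h2 := (abs_le.1 h1).1
    exact max_le (by linarith) (norm_nonneg u)
  have hUb : ∀ u ∈ ball x (η * t), ‖u‖ ≤ U := by
    intro u hu
    have hu' := hsub hu
    rw [mem_ball] at hu'
    have := norm_sub_norm_le u y
    rw [← dist_eq_norm] at this
    simp only [hUdef]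
    linarith
  have hUL : U ^ 2 - L ^ 2 ≤ 4 := by
    rcases max_cases (‖y‖ - t) 0 with ⟨he, hc⟩ | ⟨he, hc⟩ <;>
      simp only [hLdef, hUdef, he] <;> nlinarith [norm_nonneg y]
  clear_value L U
  -- the key real inequality
  have hreal : (1/2) * η ^ n * Real.exp (-2) * (c₀ * Real.exp (-L ^ 2 / 2)) ≤
      (1/2) * ((c₀ * Real.exp (-U ^ 2 / 2)) * η ^ n) := by
    have hexp : Real.exp (-2) * Real.exp (-L ^ 2 / 2) ≤ Real.exp (-U ^ 2 / 2) := by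
      rw [← Real.exp_add]
      exact Real.exp_le_exp.2 (by linarith)
    have hcoef : (0:ℝ) ≤ (1/2) * η ^ n * c₀ := by positivity
    nlinarith [mul_le_mul_of_nonneg_left hexp hcoef]
  -- volume identities
  have hvol1 : volume (ball y t) = volume (ball (0 : E n) t) :=
    Measure.addHaar_ball_center volume y t
  have hvol2 : volume (ball x (η * t)) = ENNReal.ofReal (η ^ n) * volume (ball (0 : E n) t) := by
    rw [Measure.addHaar_ball_mul_of_pos volume x hη0 t, finrank_euclideanSpace_fin]
  -- assemble
  calc ENNReal.ofReal ((1/2) * η ^ n * Real.exp (-2)) * gaussianM n (ball y t)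
      ≤ ENNReal.ofReal ((1/2) * η ^ n * Real.exp (-2)) *
        (ENNReal.ofReal (c₀ * Real.exp (-L ^ 2 / 2)) * volume (ball y t)) :=
        mul_le_mul_right (gaussianM_le n _ measurableSet_ball L hL0 hLb) _
    _ = ENNReal.ofReal ((1/2) * η ^ n * Real.exp (-2) * (c₀ * Real.exp (-L ^ 2 / 2))) *
        volume (ball (0 : E n) t) := by
        rw [← mul_assoc, ← ENNReal.ofReal_mul (by positivity), hvol1]
    _ ≤ ENNReal.ofReal ((1/2) * ((c₀ * Real.exp (-U ^ 2 / 2)) * η ^ n)) *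
        volume (ball (0 : E n) t) :=
        mul_le_mul_left (ENNReal.ofReal_le_ofReal hreal) _
    _ = ENNReal.ofReal (1/2) * (ENNReal.ofReal (c₀ * Real.exp (-U ^ 2 / 2)) *
        (ENNReal.ofReal (η ^ n) * volume (ball (0 : E n) t))) := by
        rw [ENNReal.ofReal_mul (by norm_num), ENNReal.ofReal_mul (by positivity)]
        ring
    _ = ENNReal.ofReal (1/2) * (ENNReal.ofReal (c₀ * Real.exp (-U ^ 2 / 2)) *
        volume (ball x (η * t))) := by rw [hvol2]
    _ ≤ ENNReal.ofReal (1/2) * gaussianM n (ball x (η * t)) :=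
        mul_le_mul_right (gaussianM_ge n _ measurableSet_ball U hUb) _
    _ ≤ gaussianM n (F ∩ ball x (η * t)) := hdens
    _ ≤ gaussianM n (F ∩ ball y t) :=
        measure_mono (inter_subset_inter_right F hsub)
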